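/- The constant starter S̃ = 0 is an approximate zero of f_{g,L} for all (g,L) in the region R₃(0) = {(g,L) : 0 < g < 1, 0 < L < min{α₀·(1−g), √3·α₀·(1−g)^{3/2}/g^{1/2}}}. -/

import Mathlib

noncomputable section

/-- The hyperbolic Kepler function `f_{g,L}(S) = S - g·arcsinh(S) - L`. -/
def fhk (g L : ℝ) : ℝ → ℝ := fun S => S - g * Real.arsinh S - L

/-- `β(f,z) = |f(z)/f'(z)|`. -/
def betaFn (f : ℝ → ℝ) (z : ℝ) : ℝ := |f z / deriv f z|

/-- `γ(f,z) = sup_{k ≥ 2} |f^{(k)}(z)/(k!·f'(z))|^{1/(k-1)}`. -/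
def gammaFn (f : ℝ → ℝ) (z : ℝ) : ℝ :=
  sSup {y : ℝ | ∃ k : ℕ, 2 ≤ k ∧
    y = |iteratedDeriv k f z / (Nat.factorial k * deriv f z)| ^ ((1 : ℝ) / ((k : ℝ) - 1))}

/-- `α(f,z) = β(f,z)·γ(f,z)`. -/
def alphaFn (f : ℝ → ℝ) (z : ℝ) : ℝ := betaFn f z * gammaFn f z

/-- Smale's constant (improved by Wang–Han): `α₀ = 3 - 2√2`. -/
def alpha0 : ℝ := 3 - 2 * Real.sqrt 2

/-- `z` is an approximate zero of `f` when `α(f,z) < α₀`. -/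
def ApproxZero (f : ℝ → ℝ) (z : ℝ) : Prop := alphaFn f z < alpha0

/-!
The Taylor coefficients `aₖ = arsinh⁽ᵏ⁾(0)` satisfy `aₖ₊₂ = -k² aₖ`, by differentiating the
equation `(1 + x²) arsinh'' + x arsinh' = 0` at `0`; hence `a₂ = 0` and `|aₖ| ≤ k!/3` for `k ≥ 2`.
As `f⁽ᵏ⁾ = -g arsinh⁽ᵏ⁾` for `k ≥ 2` and `f'(0) = 1 - g`, we get `β(f,0) = L/(1-g)` and
`γ(f,0) ≤ max(1, √(g/(3(1-g))))`: the `k = 2` term vanishes and for `k ≥ 3` the exponent `1/(k-1)`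
is at most `1/2`. The two bounds on `L` defining `R₃(0)` say precisely that `β` times either branch
of the maximum is below `α₀`.
-/

open scoped ContDiff
open Real Nat

theorem iteratedDeriv_id_mul_deriv_zero {𝕜 : Type*} [NontriviallyNormedField 𝕜] {f : 𝕜 → 𝕜}
    (hf : ContDiff 𝕜 ∞ f) (n : ℕ) :
    iteratedDeriv n (fun x => x * deriv f x) 0 = n * iteratedDeriv n f 0 := by
  have hf' : ContDiff 𝕜 ∞ (deriv f) := by simpa using hf.iterate_deriv 1
  cases n with
  | zero => simp
  | succ m =>
    rw [iteratedDeriv_fun_mul (f := fun x => x) contDiffAt_id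
      (hf'.contDiffAt.of_le (by exact_mod_cast le_top)), Finset.sum_eq_single 1]
    · simp [iteratedDeriv_fun_id_zero, ← iteratedDeriv_succ']
    · intro i _ hi
      simp [iteratedDeriv_fun_id_zero, hi]
    · simp

theorem deriv_arsinh : deriv arsinh = fun x => (√(1 + x ^ 2))⁻¹ :=
  funext fun x => (hasDerivAt_arsinh x).deriv

theorem hasDerivAt_deriv_arsinh (x : ℝ) :
    HasDerivAt (deriv arsinh) (-(x / √(1 + x ^ 2) ^ 3)) x := by
  have hs : 0 < √(1 + x ^ 2) := sqrt_pos.2 (by positivity)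
  have hsq : HasDerivAt (fun x => √(1 + x ^ 2)) (x / √(1 + x ^ 2)) x := by
    convert ((hasDerivAt_pow 2 x).const_add 1).sqrt (by positivity) using 1
    push_cast
    field_simp
  rw [deriv_arsinh]
  refine (hsq.fun_inv hs.ne').congr_deriv ?_
  field_simp

-- `v = arsinh'` solves `(1 + x²) v' + x v = 0`, written as `v' = -x (x v)'` so that
-- `iteratedDeriv_id_mul_deriv_zero` applies twice to `v'` at `0`.
theorem deriv_deriv_arsinh (x : ℝ) :
    deriv (deriv arsinh) x = -(x * deriv (fun y => y * deriv arsinh y) x) := by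
  have hs2 : √(1 + x ^ 2) ^ 2 = 1 + x ^ 2 := sq_sqrt (by positivity)
  rw [(hasDerivAt_deriv_arsinh x).deriv,
    ((hasDerivAt_id' x).fun_mul (hasDerivAt_deriv_arsinh x)).deriv, deriv_arsinh]
  field_simp
  linear_combination x * hs2

theorem contDiff_deriv_arsinh : ContDiff ℝ ∞ (deriv arsinh) := by
  simpa using (contDiff_arsinh (n := ∞)).iterate_deriv 1

theorem iteratedDeriv_arsinh_add_two_zero (n : ℕ) :
    iteratedDeriv (n + 2) arsinh 0 = -n ^ 2 * iteratedDeriv n arsinh 0 := by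
  have hG : ContDiff ℝ ∞ (fun y => y * deriv arsinh y) := contDiff_id.mul contDiff_deriv_arsinh
  rw [iteratedDeriv_succ', iteratedDeriv_succ', funext deriv_deriv_arsinh, iteratedDeriv_fun_neg,
    iteratedDeriv_id_mul_deriv_zero hG, iteratedDeriv_id_mul_deriv_zero contDiff_arsinh]
  ring

theorem abs_iteratedDeriv_arsinh_zero_le {n : ℕ} (hn : 2 ≤ n) :
    |iteratedDeriv n arsinh 0| ≤ n ! / 3 := by
  induction n using Nat.strong_induction_on with
  | _ n ih =>
    match n, hn with
    | 2, _ => norm_num [iteratedDeriv_arsinh_add_two_zero 0]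
    | 3, _ =>
      rw [iteratedDeriv_arsinh_add_two_zero 1, iteratedDeriv_one, deriv_arsinh]
      norm_num [Nat.factorial]
    | k + 4, _ =>
      have hk := ih (k + 2) (by omega) (by omega)
      have hfac : ((k + 4) ! : ℝ) = (k + 4) * (k + 3) * (k + 2) ! := by
        push_cast [Nat.factorial_succ]; ring
      rw [iteratedDeriv_arsinh_add_two_zero, abs_mul, hfac]
      push_cast
      rw [abs_neg, abs_of_nonneg (by positivity)]
      calc ((k : ℝ) + 2) ^ 2 * |iteratedDeriv (k + 2) arsinh 0|
          ≤ ((k : ℝ) + 4) * (k + 3) * ((k + 2) ! / 3) := by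
            gcongr
            nlinarith
        _ = _ := by ring

theorem rpow_le_max_one_sqrt {x e : ℝ} (hx : 0 ≤ x) (he0 : 0 ≤ e) (he : e ≤ 1 / 2) :
    x ^ e ≤ max 1 √x := by
  rcases le_or_gt x 1 with hx1 | hx1
  · exact (rpow_le_one hx hx1 he0).trans (le_max_left _ _)
  · calc x ^ e ≤ x ^ (1 / 2 : ℝ) := rpow_le_rpow_of_exponent_le hx1.le he
      _ = √x := (sqrt_eq_rpow x).symm
      _ ≤ max 1 √x := le_max_right _ _

theorem gammaFn_le_max_one_sqrt {f : ℝ → ℝ} {z t : ℝ} (h2 : iteratedDeriv 2 f z = 0)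
    (h : ∀ k : ℕ, 3 ≤ k → |iteratedDeriv k f z / (k ! * deriv f z)| ≤ t) :
    gammaFn f z ≤ max 1 √t := by
  have hmax : (0 : ℝ) ≤ max 1 √t := zero_le_one.trans (le_max_left _ _)
  refine Real.sSup_le ?_ hmax
  rintro _ ⟨k, hk, rfl⟩
  rcases hk.eq_or_lt with rfl | hk
  · norm_num [h2]
  have hk' : (3 : ℝ) ≤ k := by exact_mod_cast hk
  have he : 0 ≤ 1 / ((k : ℝ) - 1) := by rw [one_div_nonneg]; linarith
  calc _ ≤ t ^ (1 / ((k : ℝ) - 1)) := rpow_le_rpow (abs_nonneg _) (h k hk) he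
    _ ≤ max 1 √t := rpow_le_max_one_sqrt ((abs_nonneg _).trans (h k hk)) he
        (one_div_le_one_div_of_le two_pos (by linarith))

theorem hasDerivAt_fhk (g L x : ℝ) :
    HasDerivAt (fhk g L) (1 - g * (√(1 + x ^ 2))⁻¹) x :=
  ((hasDerivAt_id x).sub ((hasDerivAt_arsinh x).const_mul g)).sub_const L

theorem deriv_fhk_zero (g L : ℝ) : deriv (fhk g L) 0 = 1 - g := by
  simp [(hasDerivAt_fhk g L 0).deriv]

theorem iteratedDeriv_fhk {n : ℕ} (hn : 2 ≤ n) (g L x : ℝ) :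
    iteratedDeriv n (fhk g L) x = -(g * iteratedDeriv n arsinh x) := by
  obtain ⟨m, rfl⟩ := Nat.exists_eq_add_of_le' hn
  have hderiv : deriv (fhk g L) = fun x => 1 - g * deriv arsinh x :=
    funext fun x => by rw [(hasDerivAt_fhk g L x).deriv, (hasDerivAt_arsinh x).deriv]
  rw [iteratedDeriv_succ', hderiv, iteratedDeriv_const_sub m.succ_pos, iteratedDeriv_neg,
    iteratedDeriv_const_mul_field, ← iteratedDeriv_succ']

theorem betaFn_fhk_zero (g L : ℝ) : betaFn (fhk g L) 0 = |L / (1 - g)| := by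
  simp [betaFn, fhk, deriv_fhk_zero, neg_div]

theorem abs_iteratedDeriv_fhk_div_le {k : ℕ} (hk : 2 ≤ k) (g L : ℝ) :
    |iteratedDeriv k (fhk g L) 0 / (k ! * deriv (fhk g L) 0)| ≤ |g| / (3 * |1 - g|) := by
  rw [iteratedDeriv_fhk hk, deriv_fhk_zero, abs_div, abs_neg, abs_mul, abs_mul, Nat.abs_cast]
  rcases eq_or_ne (1 - g) 0 with hg | hg
  · simp [hg]
  have hfac : (0 : ℝ) < k ! := by exact_mod_cast k.factorial_pos
  rw [div_le_div_iff₀ (by positivity) (by positivity)]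
  have ha := abs_iteratedDeriv_arsinh_zero_le hk
  rw [le_div_iff₀ three_pos] at ha
  calc |g| * |iteratedDeriv k arsinh 0| * (3 * |1 - g|)
      = |g| * |1 - g| * (|iteratedDeriv k arsinh 0| * 3) := by ring
    _ ≤ |g| * |1 - g| * k ! := by gcongr
    _ = |g| * (k ! * |1 - g|) := by ring

theorem div_one_sub_mul_max_one_sqrt_lt_alpha0 {g L : ℝ} (hg0 : 0 < g) (hg1 : g < 1) (hL0 : 0 < L)
    (hL1 : L < min (alpha0 * (1 - g))
      (√3 * alpha0 * (1 - g) ^ ((3 : ℝ) / 2) / g ^ ((1 : ℝ) / 2))) :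
    L / (1 - g) * max 1 √(g / (3 * (1 - g))) < alpha0 := by
  have h1g : 0 < 1 - g := sub_pos.2 hg1
  obtain ⟨hL1, hL2⟩ := lt_min_iff.1 hL1
  have hr2 : √(1 - g) ^ 2 = 1 - g := sq_sqrt h1g.le
  have hr3 : (1 - g) ^ ((3 : ℝ) / 2) = √(1 - g) ^ 3 := by
    rw [show (3 : ℝ) / 2 = 1 / 2 * (3 : ℕ) by norm_num, rpow_mul h1g.le, rpow_natCast,
      ← sqrt_eq_rpow]
  rw [hr3, ← sqrt_eq_rpow, lt_div_iff₀ (sqrt_pos.2 hg0)] at hL2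
  rw [mul_max_of_nonneg _ _ (div_pos hL0 h1g).le, max_lt_iff, mul_one, div_lt_iff₀ h1g,
    sqrt_div hg0.le, sqrt_mul zero_le_three]
  refine ⟨hL1, ?_⟩
  have hprod : L / (1 - g) * (√g / (√3 * √(1 - g))) = L * √g / (√3 * √(1 - g) ^ 3) := by
    field_simp
    exact hr2
  rw [hprod, div_lt_iff₀ (by positivity)]
  linarith

/-- Theorem 3.1 (zero case): the constant starter `S̃ = 0` is an approximate zero of
`f_{g,L}` in `R₃(0) = {0 < g < 1, 0 < L < min{α₀(1-g), √3·α₀·(1-g)^{3/2}/g^{1/2}}}`. -/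
theorem zero_starter_region (g L : ℝ) (hg0 : 0 < g) (hg1 : g < 1) (hL0 : 0 < L)
    (hL1 : L < min (alpha0 * (1 - g))
      (Real.sqrt 3 * alpha0 * (1 - g) ^ ((3 : ℝ) / 2) / g ^ ((1 : ℝ) / 2))) :
    ApproxZero (fhk g L) 0 := by
  have hβ : 0 < L / (1 - g) := div_pos hL0 (sub_pos.2 hg1)
  have hγ : gammaFn (fhk g L) 0 ≤ max 1 √(g / (3 * (1 - g))) := by
    refine gammaFn_le_max_one_sqrt ?_ fun k hk => ?_
    · simp [iteratedDeriv_fhk le_rfl, iteratedDeriv_arsinh_add_two_zero 0]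
    simpa [abs_of_pos hg0, abs_of_pos (sub_pos.2 hg1)] using
      abs_iteratedDeriv_fhk_div_le (by omega : 2 ≤ k) g L
  calc alphaFn (fhk g L) 0 ≤ L / (1 - g) * max 1 √(g / (3 * (1 - g))) := by
        rw [alphaFn, betaFn_fhk_zero, abs_of_pos hβ]
        exact mul_le_mul_of_nonneg_left hγ hβ.le
    _ < alpha0 := div_one_sub_mul_max_one_sqrt_lt_alpha0 hg0 hg1 hL0 hL1
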